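/- Suppose f : ℝ^d → ℝ is L_f-smooth and ρ_f-weakly convex, h : ℝ^d → ℝ is L_h-smooth, g : ℝ^d → ℝ ∪ {+∞} is proper, lower semicontinuous and ρ-weakly convex, and let γ ∈ (0, min{1/ρ, 1/ρ_f}) and λ > 0. For x ∈ ℝ^d let Y_γ(x) be the unique minimizer over y ∈ ℝ^d of g(y) + (1/(2γ))‖y − (x − γ∇(f+h)(x))‖², and let T_γ(x) be the unique minimizer over u ∈ ℝ^d of f(u) + (1/(2γ))‖u − ((1 − λ)x + γ∇f(x) + λY_γ(x))‖². Then for every x̄ ∈ ℝ^d: T_γ(x̄) = x̄ if and only if Y_γ(x̄) = x̄. -/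

import Mathlib

open scoped RealInnerProductSpace

/-- `g` is `ρ`-weakly convex: `g + (ρ/2)‖·‖²` is convex (extended-real-valued version). -/
def WeaklyConvexE {E : Type*} [NormedAddCommGroup E] [InnerProductSpace ℝ E]
    (ρ : ℝ) (g : E → EReal) : Prop :=
  ∀ x y : E, ∀ t : ℝ, 0 ≤ t → t ≤ 1 →
    g (t • x + (1 - t) • y) + (((ρ / 2) * ‖t • x + (1 - t) • y‖ ^ 2 : ℝ) : EReal) ≤
      (t : EReal) * (g x + (((ρ / 2) * ‖x‖ ^ 2 : ℝ) : EReal)) +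
        ((1 - t : ℝ) : EReal) * (g y + (((ρ / 2) * ‖y‖ ^ 2 : ℝ) : EReal))

/-!
`T x` minimizes `φ u = f u + ‖u - w‖² / (2γ)` with `w = (1 - λ) x + γ ∇f(x) + λ Y x`.
Because `γ ρ_f < 1`, `φ` is convex, so `x` minimizes `φ` exactly when `∇φ(x) = 0`; and
`∇φ(x) = ∇f(x) + (x - w) / γ = (λ / γ) (x - Y x)`.
-/

open Set

theorem ConvexOn.isMinOn_of_hasFDerivAt_eq_zero {E : Type*} [NormedAddCommGroup E]
    [NormedSpace ℝ E] {φ : E → ℝ} {x : E} (hφ : ConvexOn ℝ univ φ)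
    (hx : HasFDerivAt φ (0 : E →L[ℝ] ℝ) x) : IsMinOn φ univ x := by
  refine isMinOn_univ_iff.mpr fun u => ?_
  let line : ℝ →ᵃ[ℝ] E := AffineMap.lineMap x u
  have hline : HasDerivAt (φ ∘ line) 0 0 := by
    have hx0 : HasFDerivAt φ (0 : E →L[ℝ] ℝ) (line 0) := by simpa [line] using hx
    simpa using hx0.comp_hasDerivAt (0 : ℝ) AffineMap.hasDerivAt_lineMap
  have := (hφ.comp_affineMap line).le_slope_of_hasDerivAt (mem_univ 0) (mem_univ 1) one_pos hline
  simpa [slope_def_field, line] using this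

section InnerProductSpace

variable {E : Type*} [NormedAddCommGroup E] [InnerProductSpace ℝ E]

theorem IsLocalMin.hasGradientAt_eq_zero [CompleteSpace E] {φ : E → ℝ} {x G : E}
    (hmin : IsLocalMin φ x) (hG : HasGradientAt φ G x) : G = 0 :=
  (InnerProductSpace.toDual ℝ E).map_eq_zero_iff.mp (hmin.hasFDerivAt_eq_zero hG)

theorem ConvexOn.isMinOn_univ_iff_hasGradientAt_eq_zero [CompleteSpace E] {φ : E → ℝ}
    {x G : E} (hφ : ConvexOn ℝ univ φ) (hG : HasGradientAt φ G x) :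
    IsMinOn φ univ x ↔ G = 0 := by
  refine ⟨fun hmin => (hmin.isLocalMin Filter.univ_mem).hasGradientAt_eq_zero hG, ?_⟩
  rintro rfl
  exact hφ.isMinOn_of_hasFDerivAt_eq_zero (by simpa using hG.hasFDerivAt)

theorem ConvexOn.add_mul_norm_sub_sq {f : E → ℝ} {ρ c : ℝ}
    (hf : ConvexOn ℝ univ fun x => f x + ρ / 2 * ‖x‖ ^ 2) (hρc : ρ / 2 ≤ c) (w : E) :
    ConvexOn ℝ univ fun u => f u + c * ‖u - w‖ ^ 2 := by
  have hsq : ConvexOn ℝ univ fun u : E => (c - ρ / 2) * ‖u‖ ^ 2 :=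
    (convexOn_univ_norm.pow (fun _ _ => norm_nonneg _) 2).smul (sub_nonneg.mpr hρc)
  have hlin : ConvexOn ℝ univ fun u : E => ⟪(-2 * c) • w, u⟫ :=
    (innerₛₗ ℝ ((-2 * c) • w)).convexOn convex_univ
  refine ((hf.add hsq).add (hlin.add_const (c * ‖w‖ ^ 2))).congr fun u _ => ?_
  show f u + ρ / 2 * ‖u‖ ^ 2 + (c - ρ / 2) * ‖u‖ ^ 2 + (⟪(-2 * c) • w, u⟫ + c * ‖w‖ ^ 2) =
    f u + c * ‖u - w‖ ^ 2
  rw [norm_sub_sq_real, real_inner_smul_left, real_inner_comm]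
  ring

theorem HasGradientAt.add_mul_norm_sub_sq [CompleteSpace E] {f : E → ℝ} {f' x : E}
    (hf : HasGradientAt f f' x) (c : ℝ) (w : E) :
    HasGradientAt (fun u => f u + c * ‖u - w‖ ^ 2) (f' + (2 * c) • (x - w)) x := by
  rw [hasGradientAt_iff_hasFDerivAt] at hf ⊢
  refine (hf.add (((hasFDerivAt_id x).sub_const w).norm_sq.const_mul c)).congr_fderiv ?_
  ext v
  simp only [id_eq, map_sub, ContinuousLinearMap.comp_id, add_apply,
    InnerProductSpace.toDual_apply_apply, smul_apply,
    sub_apply, coe_innerSL_apply, nsmul_eq_mul, Nat.cast_ofNat, smul_eq_mul,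
    map_add, map_smul, add_right_inj]
  ring

end InnerProductSpace

theorem T_fixed_iff_Y_fixed_general
    {E : Type*} [NormedAddCommGroup E] [InnerProductSpace ℝ E] [FiniteDimensional ℝ E]
    (f : E → ℝ) (ρf : ℝ)
    (hfd : Differentiable ℝ f)
    (hfwc : ConvexOn ℝ Set.univ (fun x : E => f x + (ρf / 2) * ‖x‖ ^ 2))
    (γ lam : ℝ) (hγ0 : 0 < γ) (hγρf : γ * ρf < 1) (hlam : 0 < lam)
    (Y T : E → E)
    (hT : ∀ x : E, ∀ u : E,
      f (T x) + 1 / (2 * γ) *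
        ‖T x - ((1 - lam) • x + γ • gradient f x + lam • Y x)‖ ^ 2 ≤
      f u + 1 / (2 * γ) *
        ‖u - ((1 - lam) • x + γ • gradient f x + lam • Y x)‖ ^ 2)
    (hTuniq : ∀ x u' : E, (∀ u : E,
      f u' + 1 / (2 * γ) *
        ‖u' - ((1 - lam) • x + γ • gradient f x + lam • Y x)‖ ^ 2 ≤
      f u + 1 / (2 * γ) *
        ‖u - ((1 - lam) • x + γ • gradient f x + lam • Y x)‖ ^ 2) → u' = T x) :
    ∀ xbar : E, T xbar = xbar ↔ Y xbar = xbar := by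
  intro x
  set w := (1 - lam) • x + γ • gradient f x + lam • Y x
  set φ : E → ℝ := fun u => f u + 1 / (2 * γ) * ‖u - w‖ ^ 2
  have hT_iff : T x = x ↔ IsMinOn φ univ x := by
    rw [isMinOn_univ_iff]
    exact ⟨fun hTx => hTx ▸ hT x, fun hmin => (hTuniq x x hmin).symm⟩
  have hφ_convex : ConvexOn ℝ univ φ :=
    hfwc.add_mul_norm_sub_sq (by rw [div_le_div_iff₀ two_pos (by positivity)]; nlinarith) w
  have hφ_grad : HasGradientAt φ ((lam / γ) • (x - Y x)) x := by
    convert (hfd x).hasGradientAt.add_mul_norm_sub_sq (1 / (2 * γ)) w using 1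
    match_scalars <;> field_simp <;> ring
  rw [hT_iff, hφ_convex.isMinOn_univ_iff_hasGradientAt_eq_zero hφ_grad,
    smul_eq_zero_iff_right (by positivity), sub_eq_zero, eq_comm]

theorem T_fixed_iff_Y_fixed
    {E : Type*} [NormedAddCommGroup E] [InnerProductSpace ℝ E] [FiniteDimensional ℝ E]
    (f h : E → ℝ) (g : E → EReal) (Lf Lh ρ ρf : ℝ)
    (hLf : 0 ≤ Lf) (hLh : 0 ≤ Lh) (hρ : 0 ≤ ρ) (hρf : 0 ≤ ρf)
    (hfd : Differentiable ℝ f)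
    (hflip : ∀ x y : E, ‖gradient f x - gradient f y‖ ≤ Lf * ‖x - y‖)
    (hfwc : ConvexOn ℝ Set.univ (fun x : E => f x + (ρf / 2) * ‖x‖ ^ 2))
    (hhd : Differentiable ℝ h)
    (hhlip : ∀ x y : E, ‖gradient h x - gradient h y‖ ≤ Lh * ‖x - y‖)
    (hgtop : ∃ x, g x ≠ ⊤) (hgbot : ∀ x, g x ≠ ⊥)
    (hglsc : LowerSemicontinuous g)
    (hwc : WeaklyConvexE ρ g)
    (γ lam : ℝ) (hγ0 : 0 < γ) (hγρ : γ * ρ < 1) (hγρf : γ * ρf < 1) (hlam : 0 < lam)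
    (Y T : E → E)
    (hY : ∀ x : E, ∀ w : E,
      g (Y x) + ((1 / (2 * γ) *
        ‖Y x - (x - γ • gradient (fun v => f v + h v) x)‖ ^ 2 : ℝ) : EReal) ≤
      g w + ((1 / (2 * γ) *
        ‖w - (x - γ • gradient (fun v => f v + h v) x)‖ ^ 2 : ℝ) : EReal))
    (hYuniq : ∀ x y' : E, (∀ w : E,
      g y' + ((1 / (2 * γ) *
        ‖y' - (x - γ • gradient (fun v => f v + h v) x)‖ ^ 2 : ℝ) : EReal) ≤
      g w + ((1 / (2 * γ) *
        ‖w - (x - γ • gradient (fun v => f v + h v) x)‖ ^ 2 : ℝ) : EReal)) → y' = Y x)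
    (hT : ∀ x : E, ∀ u : E,
      f (T x) + 1 / (2 * γ) *
        ‖T x - ((1 - lam) • x + γ • gradient f x + lam • Y x)‖ ^ 2 ≤
      f u + 1 / (2 * γ) *
        ‖u - ((1 - lam) • x + γ • gradient f x + lam • Y x)‖ ^ 2)
    (hTuniq : ∀ x u' : E, (∀ u : E,
      f u' + 1 / (2 * γ) *
        ‖u' - ((1 - lam) • x + γ • gradient f x + lam • Y x)‖ ^ 2 ≤
      f u + 1 / (2 * γ) *
        ‖u - ((1 - lam) • x + γ • gradient f x + lam • Y x)‖ ^ 2) → u' = T x) :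
    ∀ xbar : E, T xbar = xbar ↔ Y xbar = xbar :=
  T_fixed_iff_Y_fixed_general f ρf hfd hfwc γ lam hγ0 hγρf hlam Y T hT hTuniq
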